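/- Let G be a graph on n vertices with signed adjacency matrix A, let c > 0, and set B = Id_n + (c/√n)·A. Suppose B is positive semidefinite and C is a matrix with CᵀC = B. If G contains a k-vertex subgraph with at least (1/2+ε)·k(k−1)/2 edges and δ < 2cε(k−1)/√n, then C does not satisfy the RIP of order k with parameter δ. -/

import Mathlib

/-!
The RIP inequalities are homogeneous in `x`, so one may test them on the unnormalised indicator
vector `x = 1_S` of the dense set. Then `‖x‖² = k`, while `‖Cx‖² = xᵀ(CᵀC)x = k + (c/√n)·xᵀAx`
and `xᵀAx = 2e - k(k-1)`, where `e ≥ (1/2 + ε)k(k-1)` counts the ordered adjacent pairs in `S`.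
Hence `‖Cx‖² ≥ k + 2cεk(k-1)/√n > (1 + δ)k`.
-/

open Finset Matrix

/-- `x` is `k`-sparse: it has at most `k` nonzero coordinates. -/
def Sparse {N : Type*} [Fintype N] (k : ℕ) (x : N → ℝ) : Prop :=
  ∃ S : Finset N, S.card ≤ k ∧ ∀ i ∉ S, x i = 0

/-- `Φ` satisfies the restricted isometry property of order `k` with parameter `δ`. -/
def RIP {n N : Type*} [Fintype n] [Fintype N] (Φ : Matrix n N ℝ) (k : ℕ) (δ : ℝ) : Prop :=
  ∀ x : N → ℝ, Sparse k x →
    (1 - δ) * ∑ i, (x i) ^ 2 ≤ ∑ j, (Φ.mulVec x j) ^ 2 ∧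
    ∑ j, (Φ.mulVec x j) ^ 2 ≤ (1 + δ) * ∑ i, (x i) ^ 2

open scoped Classical in
/-- The signed adjacency matrix of a graph. -/
noncomputable def signedAdj {n : ℕ} (G : SimpleGraph (Fin n)) : Matrix (Fin n) (Fin n) ℝ :=
  fun i j => if i = j then 0 else if G.Adj i j then 1 else -1

theorem sum_sq_mulVec_eq_dotProduct_transpose_mul_mulVec {m n : Type*} [Fintype m] [Fintype n]
    (C : Matrix m n ℝ) (x : n → ℝ) :
    ∑ j, (C *ᵥ x) j ^ 2 = x ⬝ᵥ ((Cᵀ * C) *ᵥ x) := by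
  rw [← mulVec_mulVec, dotProduct_mulVec, vecMul_transpose]
  simp only [dotProduct, sq]

theorem indicator_dotProduct_mulVec_indicator {n : Type*} [Fintype n] [DecidableEq n]
    (M : Matrix n n ℝ) (S : Finset n) :
    (fun i => if i ∈ S then (1 : ℝ) else 0) ⬝ᵥ (M *ᵥ fun i => if i ∈ S then 1 else 0) =
      ∑ i ∈ S, ∑ j ∈ S, M i j := by
  simp [dotProduct, mulVec, Finset.sum_ite_mem]

open scoped Classical in
theorem sum_signedAdj_eq {n : ℕ} (G : SimpleGraph (Fin n)) (S : Finset (Fin n)) :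
    ∑ i ∈ S, ∑ j ∈ S, signedAdj G i j =
      2 * (#(S.offDiag.filter fun p => G.Adj p.1 p.2) : ℝ) - #S * (#S - 1) := by
  have hdiag : ∑ i ∈ S, ∑ j ∈ S, signedAdj G i j = ∑ p ∈ S.offDiag, signedAdj G p.1 p.2 := by
    rw [← sum_product' (f := fun i j => signedAdj G i j)]
    refine (sum_subset (fun p hp => ?_) fun p hp hp' => ?_).symm
    · simp only [mem_offDiag, mem_product] at hp ⊢; exact ⟨hp.1, hp.2.1⟩
    · simp_all [signedAdj]
  have hsign : ∀ p ∈ S.offDiag,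
      signedAdj G p.1 p.2 = 2 * (if G.Adj p.1 p.2 then 1 else 0) - 1 := by
    intro p hp
    simp only [mem_offDiag] at hp
    simp only [signedAdj, hp.2.2, if_false]
    split_ifs <;> norm_num
  rw [hdiag, sum_congr rfl hsign, sum_sub_distrib, ← mul_sum, sum_boole,
    sum_const, nsmul_one, offDiag_card]
  push_cast [Nat.cast_sub (Nat.le_mul_self #S)]
  ring

open scoped Classical in
/-- If `G` has a `k`-subgraph with excess `ε` and `δ < 2cε(k-1)/√n`, then a matrix `C`
with `CᵀC = Id + (c/√n)A` does not satisfy the RIP of order `k` with parameter `δ`. -/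
theorem stmt12 (n m k : ℕ) (c ε δ : ℝ) (G : SimpleGraph (Fin n))
    (hc : 0 < c) (hk : 1 ≤ k)
    (C : Matrix (Fin m) (Fin n) ℝ)
    (hC : Cᵀ * C = (1 : Matrix (Fin n) (Fin n) ℝ) + (c / Real.sqrt n) • signedAdj G)
    (S : Finset (Fin n)) (hS : S.card = k)
    (hdense : ((1 : ℝ) / 2 + ε) * ((k : ℝ) * ((k : ℝ) - 1)) ≤
      ((S.offDiag.filter (fun p => G.Adj p.1 p.2)).card : ℝ))
    (hδ : δ < 2 * c * ε * ((k : ℝ) - 1) / Real.sqrt n) :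
    ¬ RIP C k δ := by
  intro hRIP
  set x : Fin n → ℝ := fun i => if i ∈ S then 1 else 0
  have hx_sparse : Sparse k x := ⟨S, hS.le, fun i hi => if_neg hi⟩
  have hx_norm : ∑ i, x i ^ 2 = k := by simp [x, ← hS]
  have hCx_norm : ∑ j, (C *ᵥ x) j ^ 2 =
      k + c / √n * (2 * #(S.offDiag.filter fun p => G.Adj p.1 p.2) - k * (k - 1)) := by
    rw [sum_sq_mulVec_eq_dotProduct_transpose_mul_mulVec, hC, add_mulVec, one_mulVec,
      smul_mulVec, dotProduct_add, dotProduct_smul, indicator_dotProduct_mulVec_indicator,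
      sum_signedAdj_eq, hS, smul_eq_mul]
    simp [x, dotProduct, ← hS]
  set F : ℝ := ↑(#(S.offDiag.filter fun p => G.Adj p.1 p.2))
  have hk_pos : (0 : ℝ) < k := by exact_mod_cast hk
  have hgap : δ * k < c / √n * (2 * F - k * (k - 1)) :=
    calc δ * k < 2 * c * ε * (k - 1) / √n * k := mul_lt_mul_of_pos_right hδ hk_pos
      _ = c / √n * (2 * ε * k * (k - 1)) := by ring
      _ ≤ c / √n * (2 * F - k * (k - 1)) :=
        mul_le_mul_of_nonneg_left (by linarith) (by positivity)
  have hupper := (hRIP x hx_sparse).2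
  rw [hx_norm, hCx_norm] at hupper
  linarith
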